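/- A multilinear polynomial f: {-1,1}^n → ℝ with at most s non-zero Fourier coefficients takes at most 2^s distinct values. -/

import Mathlib

/-!
The value of `f = ∑_S c_S χ_S` at a point `b` depends only on the signs `χ_S(b) = ±1` for the
at most `s` sets `S` with `c_S ≠ 0`, and there are at most `2 ^ s` such sign patterns.
-/

open scoped Classical

open Finset

theorem Finset.prod_eq_one_or_neg_one {ι R : Type*} [CommMonoid R] [HasDistribNeg R]
    (S : Finset ι) (f : ι → R) (hf : ∀ i ∈ S, f i = 1 ∨ f i = -1) :
    ∏ i ∈ S, f i = 1 ∨ ∏ i ∈ S, f i = -1 :=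
  prod_induction f (fun x => x = 1 ∨ x = -1)
    (by rintro _ _ (rfl | rfl) (rfl | rfl) <;> simp) (Or.inl rfl) hf

theorem Finset.card_image_le_card_pow_of_factors {α ι β γ : Type*} [DecidableEq γ]
    (s : Finset α) (T : Finset ι) (V : Finset β) (χ : ι → α → β)
    (hχ : ∀ i ∈ T, ∀ a ∈ s, χ i a ∈ V) (F : (T → β) → γ) :
    (s.image fun a => F fun i => χ i a).card ≤ V.card ^ T.card := by
  have hsub : (s.image fun a => F fun i => χ i a) ⊆
      (Fintype.piFinset fun _ : T => V).image F := by
    intro y hy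
    obtain ⟨a, ha, rfl⟩ := mem_image.mp hy
    exact mem_image_of_mem F (Fintype.mem_piFinset.mpr fun i => hχ i i.2 a ha)
  calc (s.image fun a => F fun i => χ i a).card
      ≤ ((Fintype.piFinset fun _ : T => V).image F).card := card_le_card hsub
    _ ≤ (Fintype.piFinset fun _ : T => V).card := card_image_le
    _ = V.card ^ T.card := by simp [Fintype.card_piFinset]

/-- A multilinear polynomial on the Boolean cube with at most `s` non-zero
Fourier coefficients takes at most `2^s` distinct values. -/
theorem sparse_poly_at_most_two_pow_values (n s : ℕ) (c : Finset (Fin n) → ℝ)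
    (hs : (Finset.univ.filter fun S : Finset (Fin n) => c S ≠ 0).card ≤ s) :
    ((Finset.univ : Finset (Fin n → Bool)).image
        (fun b => ∑ S : Finset (Fin n), c S * ∏ i ∈ S, (if b i then (1:ℝ) else -1))).card
      ≤ 2 ^ s := by
  set T := univ.filter fun S : Finset (Fin n) => c S ≠ 0
  set χ : Finset (Fin n) → (Fin n → Bool) → ℝ := fun S b => ∏ i ∈ S, if b i then 1 else -1
  have hχ : ∀ S ∈ T, ∀ b ∈ univ, χ S b ∈ ({1, -1} : Finset ℝ) := fun S _ b _ => by
    simpa using prod_eq_one_or_neg_one S _ fun i _ => by by_cases h : b i <;> simp [h]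
  have hsupport : ∀ b, ∑ S, c S * χ S b = ∑ S : T, c S * χ S b := fun b => by
    rw [sum_coe_sort T fun S => c S * χ S b, sum_filter_of_ne fun S _ h => left_ne_zero_of_mul h]
  calc _ = (univ.image fun b => ∑ S : T, c S * χ S b).card := by
        rw [← funext hsupport]
    _ ≤ ({1, -1} : Finset ℝ).card ^ T.card :=
        card_image_le_card_pow_of_factors univ T _ χ hχ fun v => ∑ S : T, c S * v S
    _ ≤ 2 ^ T.card := Nat.pow_le_pow_left card_le_two _
    _ ≤ 2 ^ s := Nat.pow_le_pow_right two_pos hs
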